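/- Projection onto the ℓ¹ ball: let α > 0, C = {w ∈ ℝⁿ : ‖w‖₁ ≤ α}, and z ∉ C. Then there exists μ̄ > 0 with ‖shrink₁(z, μ̄)‖₁ = α, and the Euclidean projection of z onto C equals shrink₁(z, μ̄). -/

import Mathlib

/-!
The scalar soft threshold `s = shrink₁(x, μ)` satisfies `|x - s| ≤ μ` and `(x - s) s = μ |s|`;
summed over coordinates this gives `⟪z - s, y - s⟫ ≤ μ (‖y‖₁ - ‖s‖₁)`. Choosing `μ` by the
intermediate value theorem so that `‖s‖₁ = α`, the right side is `≤ 0` on the ball, which is the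
variational inequality characterising `s` as the nearest point of the ball to `z`.
-/

open Finset

noncomputable def softThreshold (μ x : ℝ) : ℝ := Real.sign x * max (|x| - μ) 0

section softThreshold
variable {μ x : ℝ}

theorem softThreshold_of_abs_le (h : |x| ≤ μ) : softThreshold μ x = 0 := by
  simp [softThreshold, max_eq_right (sub_nonpos.mpr h)]

theorem sub_softThreshold_of_lt_abs (h : μ < |x|) :
    x - softThreshold μ x = μ * Real.sign x := by
  rcases lt_trichotomy x 0 with hx | rfl | hx
  · simp only [softThreshold, Real.sign_of_neg hx, abs_of_neg hx] at h ⊢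
    rw [max_eq_left (by linarith)]; ring
  · simp [softThreshold]
  · simp only [softThreshold, Real.sign_of_pos hx, abs_of_pos hx] at h ⊢
    rw [max_eq_left (by linarith)]; ring

theorem abs_softThreshold (hμ : 0 ≤ μ) : |softThreshold μ x| = max (|x| - μ) 0 := by
  rcases lt_trichotomy x 0 with hx | rfl | hx
  · simp [softThreshold, Real.sign_of_neg hx]
  · simp [softThreshold, hμ]
  · simp [softThreshold, Real.sign_of_pos hx]

theorem abs_sub_softThreshold_le (hμ : 0 ≤ μ) : |x - softThreshold μ x| ≤ μ := by
  rcases le_or_gt |x| μ with h | h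
  · rwa [softThreshold_of_abs_le h, sub_zero]
  · rw [sub_softThreshold_of_lt_abs h, abs_mul, abs_of_nonneg hμ]
    refine mul_le_of_le_one_right hμ ?_
    rcases Real.sign_apply_eq x with hs | hs | hs <;> simp [hs]

theorem sub_softThreshold_mul_self (hμ : 0 ≤ μ) :
    (x - softThreshold μ x) * softThreshold μ x = μ * |softThreshold μ x| := by
  rcases le_or_gt |x| μ with h | h
  · simp [softThreshold_of_abs_le h]
  · have hx : x ≠ 0 := by rintro rfl; simp at h; linarith
    rw [sub_softThreshold_of_lt_abs h, abs_softThreshold hμ, softThreshold,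
      max_eq_left (by linarith)]
    rcases Real.sign_apply_eq_of_ne_zero x hx with hs | hs
    · simp [hs]; ring
    · simp [hs]

/-- `x - softThreshold μ x` is a subgradient of `μ |·|` at `softThreshold μ x`, i.e.
`softThreshold μ x` is the proximal point of `μ |·|` at `x`. -/
theorem sub_softThreshold_mul_sub_le (hμ : 0 ≤ μ) (y : ℝ) :
    (x - softThreshold μ x) * (y - softThreshold μ x) ≤ μ * (|y| - |softThreshold μ x|) := by
  calc (x - softThreshold μ x) * (y - softThreshold μ x)
      = (x - softThreshold μ x) * y - μ * |softThreshold μ x| := by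
        rw [mul_sub, sub_softThreshold_mul_self hμ]
    _ ≤ |x - softThreshold μ x| * |y| - μ * |softThreshold μ x| := by
        exact sub_le_sub_right ((le_abs_self _).trans (abs_mul _ _).le) _
    _ ≤ μ * (|y| - |softThreshold μ x|) := by
        rw [mul_sub]; gcongr; exact abs_sub_softThreshold_le hμ

end softThreshold

theorem exists_pos_sum_max_sub_eq {ι : Type*} [Fintype ι] {a : ι → ℝ} (ha : ∀ i, 0 ≤ a i)
    {α : ℝ} (hα : 0 ≤ α) (h : α < ∑ i, a i) : ∃ μ, 0 < μ ∧ ∑ i, max (a i - μ) 0 = α := by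
  set f : ℝ → ℝ := fun μ => ∑ i, max (a i - μ) 0
  have hf0 : f 0 = ∑ i, a i := sum_congr rfl fun i _ => by simp [ha i]
  have hf_sum : f (∑ i, a i) = 0 := sum_eq_zero fun i _ =>
    max_eq_right (sub_nonpos.mpr (single_le_sum (fun j _ => ha j) (mem_univ i)))
  have hcont : Continuous f := by fun_prop
  obtain ⟨μ, ⟨hμ0, -⟩, hμ⟩ := intermediate_value_Icc' (sum_nonneg fun i _ => ha i)
    hcont.continuousOn ⟨hf_sum ▸ hα, hf0 ▸ h.le⟩
  refine ⟨μ, hμ0.lt_of_ne ?_, hμ⟩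
  rintro rfl
  exact h.ne' (hf0 ▸ hμ)

theorem eq_of_norm_sub_le_of_inner_le_zero {E : Type*} [NormedAddCommGroup E]
    [InnerProductSpace ℝ E] {z s p : E} (hp : ‖p - z‖ ≤ ‖s - z‖)
    (hs : inner ℝ (z - s) (p - s) ≤ 0) : p = s := by
  have hexpand : ‖p - z‖ ^ 2 = ‖p - s‖ ^ 2 - 2 * inner ℝ (p - s) (z - s) + ‖z - s‖ ^ 2 := by
    rw [← norm_sub_sq_real, sub_sub_sub_cancel_right]
  have hsq : ‖p - z‖ ^ 2 ≤ ‖z - s‖ ^ 2 := by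
    rw [← norm_neg (z - s), neg_sub]; gcongr
  rw [real_inner_comm] at hexpand
  have : ‖p - s‖ ^ 2 ≤ 0 := by linarith
  rw [← sub_eq_zero, ← norm_eq_zero]
  exact pow_eq_zero_iff two_ne_zero |>.mp (le_antisymm this (sq_nonneg _))

open Finset in
/-- Projection onto the ℓ¹ ball: for `z ∉ C = {w : ‖w‖₁ ≤ α}`, there exists `μ̄ > 0` with
`‖shrink₁(z,μ̄)‖₁ = α`, and the Euclidean projection of `z` onto `C` is `shrink₁(z,μ̄)`. -/
theorem projection_onto_l1_ball (n : ℕ) (α : ℝ) (hα : 0 < α)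
    (C : Set (EuclideanSpace ℝ (Fin n)))
    (hC : C = {w : EuclideanSpace ℝ (Fin n) | ∑ i, |w i| ≤ α})
    (z : EuclideanSpace ℝ (Fin n)) (hz : z ∉ C)
    (shrink : ℝ → EuclideanSpace ℝ (Fin n))
    (hshrink : ∀ μ i, shrink μ i = Real.sign (z i) * max (|z i| - μ) 0) :
    ∃ μ : ℝ, 0 < μ ∧ (∑ i, |shrink μ i|) = α ∧
      ∀ p ∈ C, (∀ y ∈ C, ‖p - z‖ ≤ ‖y - z‖) → p = shrink μ := by
  subst hC
  obtain ⟨μ, hμ, hμα⟩ := exists_pos_sum_max_sub_eq (fun i => abs_nonneg (z i)) hα.le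
    (not_le.mp hz)
  have hshrink_μ : ∀ i, shrink μ i = softThreshold μ (z i) := hshrink μ
  have hnorm : ∑ i, |shrink μ i| = α := by
    simpa only [hshrink_μ, abs_softThreshold hμ.le] using hμα
  refine ⟨μ, hμ, hnorm, fun p hp hmin => eq_of_norm_sub_le_of_inner_le_zero (hmin _ hnorm.le) ?_⟩
  calc inner ℝ (z - shrink μ) (p - shrink μ)
      = ∑ i, (z i - softThreshold μ (z i)) * (p i - softThreshold μ (z i)) := by
        simp [PiLp.inner_apply, hshrink_μ, mul_comm]
    _ ≤ ∑ i, μ * (|p i| - |shrink μ i|) := by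
        refine sum_le_sum fun i _ => ?_
        rw [hshrink_μ]
        exact sub_softThreshold_mul_sub_le hμ.le _
    _ ≤ 0 := by
        rw [← mul_sum, sum_sub_distrib, hnorm]
        exact mul_nonpos_of_nonneg_of_nonpos hμ.le (sub_nonpos.mpr hp)
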